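/- arXiv:2303.05406 — 6 statements merged into one kernel-verified Lean document; each statement's English description precedes it below -/
import Mathlib

section
/- Let L > 0, J ≥ N ≥ 2 be natural numbers, γ ∈ (0,1], (c_n) a sequence of reals bounded above by L, and a_n = N/(γ(n+J)) for all n. If (s_n) is a sequence of nonnegative reals with s_0 ≤ L and s_{n+1} ≤ (1 - γ·a_{n+1})·s_n + (a_n - a_{n+1})·c_n for all n, then for all n, s_n ≤ J·L/(γ(n+J)). -/
theorem stmt0 (L : ℝ) (hL : 0 < L) (J N : ℕ) (hN : 2 ≤ N) (hJN : N ≤ J)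
    (γ : ℝ) (hγ : γ ∈ Set.Ioc (0:ℝ) 1)
    (c : ℕ → ℝ) (hc : ∀ n, c n ≤ L)
    (a : ℕ → ℝ) (ha : ∀ n, a n = N / (γ * (n + J)))
    (s : ℕ → ℝ) (hs : ∀ n, 0 ≤ s n) (hs0 : s 0 ≤ L)
    (hrec : ∀ n, s (n + 1) ≤ (1 - γ * a (n + 1)) * s n + (a n - a (n + 1)) * c n) :
    ∀ n, s n ≤ (J * L) / (γ * (n + J)) := by
  obtain ⟨hγ0, hγ1⟩ := hγ
  have hN2 : (2:ℝ) ≤ N := by exact_mod_cast hN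
  have hJN' : (N:ℝ) ≤ J := by exact_mod_cast hJN
  have hJ2 : (2:ℝ) ≤ J := le_trans hN2 hJN'
  intro n
  induction n with
  | zero =>
    have hD : 0 < γ * ((0:ℕ) + J) := by push_cast; nlinarith
    rw [le_div_iff₀ hD]
    push_cast
    nlinarith [mul_nonneg (hs 0) (sub_nonneg.mpr hγ1), mul_le_mul_of_nonneg_right (show s 0 * γ ≤ L by nlinarith [mul_nonneg (hs 0) (sub_nonneg.mpr hγ1)]) (show (0:ℝ) ≤ (J:ℝ) by linarith)]
  | succ n ih =>
    have hn0 : (0:ℝ) ≤ n := Nat.cast_nonneg n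
    have hD1 : 0 < γ * ((n:ℝ) + J) := by nlinarith
    have hD2 : 0 < γ * (((n:ℝ)+1) + J) := by nlinarith
    have ha1 : a (n+1) = N / (γ * (((n:ℝ)+1) + J)) := by rw [ha]; push_cast; ring_nf
    have han : a n = N / (γ * ((n:ℝ) + J)) := ha n
    have hcoef : 0 ≤ 1 - γ * a (n+1) := by
      rw [ha1, sub_nonneg]
      have he : γ * ((N:ℝ) / (γ * ((n:ℝ)+1+J))) = (N:ℝ) / ((n:ℝ)+1+J) := by
        field_simp
      rw [he, div_le_one (by linarith)]
      linarith
    have hdiff : 0 ≤ a n - a (n+1) := by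
      rw [ha1, han, sub_nonneg]
      apply div_le_div_of_nonneg_left (by positivity) hD1
      nlinarith
    have step1 : s (n+1) ≤ (1 - γ * a (n+1)) * ((J * L) / (γ * (n + J))) + (a n - a (n+1)) * L := by
      calc s (n+1) ≤ (1 - γ * a (n + 1)) * s n + (a n - a (n + 1)) * c n := hrec n
        _ ≤ _ := by
          gcongr
          exact hc n
    refine step1.trans ?_
    rw [ha1, han]
    push_cast
    rw [← sub_nonneg]
    have heq : (J:ℝ) * L / (γ * (((n:ℝ)+1) + J)) -
        ((1 - γ * ((N:ℝ) / (γ * (((n:ℝ)+1) + J)))) * ((J:ℝ) * L / (γ * ((n:ℝ) + J))) +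
          ((N:ℝ) / (γ * ((n:ℝ) + J)) - (N:ℝ) / (γ * (((n:ℝ)+1) + J))) * L)
        = γ * L * ((N:ℝ)*J - N - J) / ((γ * ((n:ℝ) + J)) * (γ * (((n:ℝ)+1) + J))) := by
      field_simp
      ring
    rw [heq]
    apply div_nonneg _ (by positivity)
    have : (0:ℝ) ≤ (N:ℝ)*J - N - J := by nlinarith
    positivity
end

section
/- Let ρ ∈ [0,1), J = 2·⌈1/(1-ρ)⌉, and α_n = 1 - 2/((1-ρ)(n+J)) for all n. For the SAM iteration x_0 = x, x_{n+1} = (1-α_n)f(x_n) + α_n T(x_n) in a W-hyperbolic space, with p a fixed point of T and M ≥ max{d(x,p), d(p,f(p))/(1-ρ)}, it holds for all n that d(x_{n+1}, x_n) ≤ 2MJ/((1-ρ)(n+J)). -/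
/-!
Since `p` is fixed by `T` and `f` moves `p` by at most `(1 - ρ) M`, both maps send the ball
`{y ∈ C | d(y, p) ≤ M}` into itself, hence so does each averaging step and the whole orbit stays
in it; in particular `d(f xₙ, T xₙ) ≤ 2M`. Comparing `x_{n+2} = W(f x_{n+1}, T x_{n+1}, α_{n+1})`
with `W(f xₙ, T xₙ, α_{n+1})` by (W4) and the latter with `x_{n+1}` by (W2) gives
`d_{n+1} ≤ (1 - (1-ρ)(1-α_{n+1})) dₙ + |α_{n+1} - αₙ| 2M` for `dₙ = d(x_{n+1}, xₙ)`.
For the given step sizes this is `d_{n+1} ≤ (1 - 2/(n+1+J)) dₙ + (βₙ - β_{n+1}) 2M` with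
`βₙ = 2/((1-ρ)(n+J))`, and the bound `2MJ/((1-ρ)(n+J))` propagates by induction because `J ≥ 2`.
-/

open Set

theorem le_of_recursive_ineq {a J K : ℝ} {d : ℕ → ℝ} (ha : 0 < a) (ha1 : a ≤ 1)
    (haJ : 2 ≤ a * J) (hK : 0 ≤ K) (h0 : d 0 ≤ K)
    (hrec : ∀ n : ℕ, d (n + 1) ≤
      (1 - 2 / (n + 1 + J)) * d n + (2 / (a * (n + J)) - 2 / (a * (n + 1 + J))) * K)
    (n : ℕ) : d n ≤ K * J / (a * (n + J)) := by
  have hJ : 2 ≤ J := by nlinarith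
  induction n with
  | zero =>
    calc d 0 ≤ K := h0
      _ ≤ K / a := le_div_self hK ha ha1
      _ = K * J / (a * ((0 : ℕ) + J)) := by field_simp; push_cast; ring
  | succ n ih =>
    have hs : (0 : ℝ) < n + J := by positivity
    have hc : 0 ≤ 1 - 2 / (n + 1 + J) := by
      rw [sub_nonneg, div_le_one (by positivity)]; linarith
    have hgap : K * J / (a * (n + 1 + J)) - ((1 - 2 / (n + 1 + J)) * (K * J / (a * (n + J)))
        + (2 / (a * (n + J)) - 2 / (a * (n + 1 + J))) * K)
        = K * (J - 2) / (a * (n + J) * (n + 1 + J)) := by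
      field_simp
      ring
    calc d (n + 1)
        ≤ (1 - 2 / (n + 1 + J)) * d n + (2 / (a * (n + J)) - 2 / (a * (n + 1 + J))) * K :=
          hrec n
      _ ≤ (1 - 2 / (n + 1 + J)) * (K * J / (a * (n + J)))
          + (2 / (a * (n + J)) - 2 / (a * (n + 1 + J))) * K := by gcongr
      _ ≤ K * J / (a * (n + 1 + J)) := by
          have : 0 ≤ K * (J - 2) / (a * (n + J) * (n + 1 + J)) := by
            apply div_nonneg (mul_nonneg hK (by linarith)); positivity
          linarith
      _ = K * J / (a * ((n + 1 : ℕ) + J)) := by push_cast; ring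

section StepSizes

variable {ρ J : ℝ}

theorem two_le_mul_two_mul_ceil {a : ℝ} (ha : 0 < a) : 2 ≤ a * (2 * ⌈1 / a⌉₊ : ℕ) := by
  have h := mul_le_mul_of_nonneg_left (Nat.le_ceil (1 / a)) ha.le
  rw [mul_one_div_cancel ha.ne'] at h
  push_cast
  linarith

theorem one_sub_two_div_mem_Icc (ha : 0 < 1 - ρ) (haJ : 2 ≤ (1 - ρ) * J) (n : ℕ) :
    1 - 2 / ((1 - ρ) * (n + J)) ∈ Icc (0 : ℝ) 1 := by
  have hs : 2 ≤ (1 - ρ) * (n + J) := by nlinarith [n.cast_nonneg (α := ℝ)]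
  constructor
  · rw [sub_nonneg, div_le_one (by linarith)]; exact hs
  · have : 0 < 2 / ((1 - ρ) * (n + J)) := by apply div_pos two_pos; linarith
    linarith

theorem step_coeff_eq {n : ℕ} (ha : 0 < 1 - ρ) (hs : 0 < (n : ℝ) + 1 + J) :
    (1 - (1 - 2 / ((1 - ρ) * (n + 1 + J)))) * ρ + (1 - 2 / ((1 - ρ) * (n + 1 + J)))
      = 1 - 2 / (n + 1 + J) := by
  field_simp
  ring

theorem abs_step_sub_eq {n : ℕ} (ha : 0 < 1 - ρ) (hs : 0 < (n : ℝ) + J) :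
    |(1 - 2 / ((1 - ρ) * (n + 1 + J))) - (1 - 2 / ((1 - ρ) * (n + J)))|
      = 2 / ((1 - ρ) * (n + J)) - 2 / ((1 - ρ) * (n + 1 + J)) := by
  have : 2 / ((1 - ρ) * (n + 1 + J)) ≤ 2 / ((1 - ρ) * (n + J)) := by
    gcongr
    linarith
  rw [abs_of_nonneg (by linarith)]
  ring

end StepSizes

section Hyperbolic

variable {X : Type*} [MetricSpace X] {W : X → X → ℝ → X}

theorem dist_W_le_of_le
    (W1 : ∀ (x y z : X), ∀ l ∈ Icc (0:ℝ) 1,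
      dist z (W x y l) ≤ (1 - l) * dist z x + l * dist z y)
    {x y z : X} {l r : ℝ} (hl : l ∈ Icc (0:ℝ) 1) (hx : dist x z ≤ r) (hy : dist y z ≤ r) :
    dist (W x y l) z ≤ r := by
  rw [dist_comm] at hx hy ⊢
  calc dist z (W x y l) ≤ (1 - l) * dist z x + l * dist z y := W1 x y z l hl
    _ ≤ (1 - l) * r + l * r := by gcongr <;> linarith [hl.1, hl.2]
    _ = r := by ring

theorem dist_W_W_le
    (W2 : ∀ (x y : X), ∀ l ∈ Icc (0:ℝ) 1, ∀ m ∈ Icc (0:ℝ) 1,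
      dist (W x y l) (W x y m) = |l - m| * dist x y)
    (W4 : ∀ (x y z w : X), ∀ l ∈ Icc (0:ℝ) 1,
      dist (W x z l) (W y w l) ≤ (1 - l) * dist x y + l * dist z w)
    {x y x' y' : X} {l m : ℝ} (hl : l ∈ Icc (0:ℝ) 1) (hm : m ∈ Icc (0:ℝ) 1) :
    dist (W x' y' l) (W x y m) ≤ (1 - l) * dist x' x + l * dist y' y + |l - m| * dist x y :=
  calc dist (W x' y' l) (W x y m) ≤ dist (W x' y' l) (W x y l) + dist (W x y l) (W x y m) :=
        dist_triangle _ _ _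
    _ ≤ _ := add_le_add (W4 x' x y' y l hl) (W2 x y l hl m hm).le

variable {C : Set X} {T f : X → X} {ρ M : ℝ} {p : X}

theorem dist_map_le_of_dist_le
    (hT : ∀ x ∈ C, ∀ y ∈ C, dist (T x) (T y) ≤ dist x y)
    (hf : ∀ x ∈ C, ∀ y ∈ C, dist (f x) (f y) ≤ ρ * dist x y) (hρ : 0 ≤ ρ)
    (hp : p ∈ C) (hfix : T p = p) (hfp : dist (f p) p ≤ (1 - ρ) * M)
    {y : X} (hy : y ∈ C) (hyM : dist y p ≤ M) :
    dist (f y) p ≤ M ∧ dist (T y) p ≤ M := by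
  refine ⟨?_, ?_⟩
  · calc dist (f y) p ≤ dist (f y) (f p) + dist (f p) p := dist_triangle _ _ _
      _ ≤ ρ * M + (1 - ρ) * M := by gcongr; exact (hf y hy p hp).trans (by gcongr)
      _ = M := by ring
  · calc dist (T y) p = dist (T y) (T p) := by rw [hfix]
      _ ≤ M := (hT y hy p hp).trans hyM

variable {α : ℕ → ℝ} {x : ℕ → X}

theorem orbit_mem_and_dist_le
    (W1 : ∀ (x y z : X), ∀ l ∈ Icc (0:ℝ) 1,
      dist z (W x y l) ≤ (1 - l) * dist z x + l * dist z y)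
    (hC : ∀ x ∈ C, ∀ y ∈ C, ∀ l ∈ Icc (0:ℝ) 1, W x y l ∈ C)
    (hTC : ∀ x ∈ C, T x ∈ C) (hfC : ∀ x ∈ C, f x ∈ C)
    (hT : ∀ x ∈ C, ∀ y ∈ C, dist (T x) (T y) ≤ dist x y)
    (hf : ∀ x ∈ C, ∀ y ∈ C, dist (f x) (f y) ≤ ρ * dist x y) (hρ : 0 ≤ ρ)
    (hα : ∀ n, α n ∈ Icc (0:ℝ) 1) (hxrec : ∀ n, x (n + 1) = W (f (x n)) (T (x n)) (α n))
    (hx0 : x 0 ∈ C) (hp : p ∈ C) (hfix : T p = p)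
    (hM : dist (x 0) p ≤ M) (hfp : dist (f p) p ≤ (1 - ρ) * M) (n : ℕ) :
    x n ∈ C ∧ dist (x n) p ≤ M := by
  induction n with
  | zero => exact ⟨hx0, hM⟩
  | succ n ih =>
    obtain ⟨hxC, hxM⟩ := ih
    obtain ⟨hfM, hTM⟩ := dist_map_le_of_dist_le hT hf hρ hp hfix hfp hxC hxM
    rw [hxrec]
    exact ⟨hC _ (hfC _ hxC) _ (hTC _ hxC) _ (hα n), dist_W_le_of_le W1 (hα n) hfM hTM⟩

theorem dist_succ_succ_le
    (W2 : ∀ (x y : X), ∀ l ∈ Icc (0:ℝ) 1, ∀ m ∈ Icc (0:ℝ) 1,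
      dist (W x y l) (W x y m) = |l - m| * dist x y)
    (W4 : ∀ (x y z w : X), ∀ l ∈ Icc (0:ℝ) 1,
      dist (W x z l) (W y w l) ≤ (1 - l) * dist x y + l * dist z w)
    (hT : ∀ x ∈ C, ∀ y ∈ C, dist (T x) (T y) ≤ dist x y)
    (hf : ∀ x ∈ C, ∀ y ∈ C, dist (f x) (f y) ≤ ρ * dist x y)
    (hα : ∀ n, α n ∈ Icc (0:ℝ) 1) (hxrec : ∀ n, x (n + 1) = W (f (x n)) (T (x n)) (α n))
    (hxC : ∀ n, x n ∈ C) {K : ℝ} (hfT : ∀ n, dist (f (x n)) (T (x n)) ≤ K) (n : ℕ) :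
    dist (x (n + 2)) (x (n + 1)) ≤
      ((1 - α (n + 1)) * ρ + α (n + 1)) * dist (x (n + 1)) (x n) + |α (n + 1) - α n| * K := by
  have hc : 0 ≤ 1 - α (n + 1) := sub_nonneg.2 (hα (n + 1)).2
  have hfn := hf _ (hxC (n + 1)) _ (hxC n)
  have hTn := hT _ (hxC (n + 1)) _ (hxC n)
  have hKn := hfT n
  calc dist (x (n + 2)) (x (n + 1))
      = dist (W (f (x (n + 1))) (T (x (n + 1))) (α (n + 1))) (W (f (x n)) (T (x n)) (α n)) := by
        rw [← hxrec, ← hxrec]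
    _ ≤ (1 - α (n + 1)) * dist (f (x (n + 1))) (f (x n))
        + α (n + 1) * dist (T (x (n + 1))) (T (x n))
        + |α (n + 1) - α n| * dist (f (x n)) (T (x n)) := dist_W_W_le W2 W4 (hα _) (hα _)
    _ ≤ (1 - α (n + 1)) * (ρ * dist (x (n + 1)) (x n)) + α (n + 1) * dist (x (n + 1)) (x n)
        + |α (n + 1) - α n| * K := by
        gcongr
        exact (hα (n + 1)).1
    _ = _ := by ring

end Hyperbolic

theorem stmt7_general {X : Type*} [MetricSpace X] (W : X → X → ℝ → X)
    (W1 : ∀ (x y z : X), ∀ l ∈ Set.Icc (0:ℝ) 1,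
      dist z (W x y l) ≤ (1 - l) * dist z x + l * dist z y)
    (W2 : ∀ (x y : X), ∀ l ∈ Set.Icc (0:ℝ) 1, ∀ m ∈ Set.Icc (0:ℝ) 1,
      dist (W x y l) (W x y m) = |l - m| * dist x y)
    (W4 : ∀ (x y z w : X), ∀ l ∈ Set.Icc (0:ℝ) 1,
      dist (W x z l) (W y w l) ≤ (1 - l) * dist x y + l * dist z w)
    (C : Set X)
    (hC : ∀ x ∈ C, ∀ y ∈ C, ∀ l ∈ Set.Icc (0:ℝ) 1, W x y l ∈ C)
    (T f : X → X) (hTC : ∀ x ∈ C, T x ∈ C) (hfC : ∀ x ∈ C, f x ∈ C)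
    (hT : ∀ x ∈ C, ∀ y ∈ C, dist (T x) (T y) ≤ dist x y)
    (ρ : ℝ) (hρ : ρ ∈ Set.Ico (0:ℝ) 1)
    (hf : ∀ x ∈ C, ∀ y ∈ C, dist (f x) (f y) ≤ ρ * dist x y)
    (α : ℕ → ℝ)
    (x₀ : X) (hx₀ : x₀ ∈ C) (x : ℕ → X) (hx0 : x 0 = x₀)
    (J : ℕ) (hJ : J = 2 * ⌈1 / (1 - ρ)⌉₊)
    (hα : ∀ n, α n = 1 - 2 / ((1 - ρ) * (n + J)))
    (hxrec : ∀ n, x (n + 1) = W (f (x n)) (T (x n)) (α n))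
    (p : X) (hp : p ∈ C) (hfix : T p = p)
    (M : ℝ) (hM1 : dist x₀ p ≤ M) (hM2 : dist p (f p) / (1 - ρ) ≤ M) :
    ∀ n, dist (x (n + 1)) (x n) ≤ (2 * M * J) / ((1 - ρ) * (n + J)) := by
  obtain ⟨hρ0, hρ1⟩ := hρ
  have ha : 0 < 1 - ρ := sub_pos.2 hρ1
  have haJ : 2 ≤ (1 - ρ) * J := hJ ▸ two_le_mul_two_mul_ceil ha
  have hαI : ∀ n, α n ∈ Icc (0:ℝ) 1 := fun n => hα n ▸ one_sub_two_div_mem_Icc ha haJ n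
  have hfp : dist (f p) p ≤ (1 - ρ) * M := by
    rw [dist_comm]; rwa [div_le_iff₀ ha, mul_comm] at hM2
  have horbit := orbit_mem_and_dist_le W1 hC hTC hfC hT hf hρ0 hαI hxrec (hx0 ▸ hx₀) hp hfix
    (hx0 ▸ hM1) hfp
  have hfT : ∀ n, dist (f (x n)) (T (x n)) ≤ 2 * M := fun n => by
    obtain ⟨hfM, hTM⟩ := dist_map_le_of_dist_le hT hf hρ0 hp hfix hfp (horbit n).1 (horbit n).2
    linarith [dist_triangle_right (f (x n)) (T (x n)) p]
  intro n
  refine le_of_recursive_ineq (K := 2 * M) (d := fun n => dist (x (n + 1)) (x n)) ha (by linarith) haJ (by linarith [dist_nonneg.trans hM1]) ?_ ?_ n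
  · show dist (x 1) (x 0) ≤ 2 * M
    linarith [dist_triangle_right (x 1) (x 0) p, (horbit 0).2, (horbit 1).2]
  · intro n
    have hs : (0 : ℝ) < n + J :=
      add_pos_of_nonneg_of_pos n.cast_nonneg (pos_of_mul_pos_right (by linarith) ha.le)
    have := dist_succ_succ_le W2 W4 hT hf hαI hxrec (fun n => (horbit n).1) hfT n
    rw [hα (n + 1), hα n] at this
    push_cast at this
    rwa [step_coeff_eq ha (by linarith), abs_step_sub_eq ha hs] at this

theorem stmt7 {X : Type*} [MetricSpace X] (W : X → X → ℝ → X)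
    (W1 : ∀ (x y z : X), ∀ l ∈ Set.Icc (0:ℝ) 1,
      dist z (W x y l) ≤ (1 - l) * dist z x + l * dist z y)
    (W2 : ∀ (x y : X), ∀ l ∈ Set.Icc (0:ℝ) 1, ∀ m ∈ Set.Icc (0:ℝ) 1,
      dist (W x y l) (W x y m) = |l - m| * dist x y)
    (W3 : ∀ (x y : X), ∀ l ∈ Set.Icc (0:ℝ) 1, W x y l = W y x (1 - l))
    (W4 : ∀ (x y z w : X), ∀ l ∈ Set.Icc (0:ℝ) 1,
      dist (W x z l) (W y w l) ≤ (1 - l) * dist x y + l * dist z w)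
    (C : Set X)
    (hC : ∀ x ∈ C, ∀ y ∈ C, ∀ l ∈ Set.Icc (0:ℝ) 1, W x y l ∈ C)
    (T f : X → X) (hTC : ∀ x ∈ C, T x ∈ C) (hfC : ∀ x ∈ C, f x ∈ C)
    (hT : ∀ x ∈ C, ∀ y ∈ C, dist (T x) (T y) ≤ dist x y)
    (ρ : ℝ) (hρ : ρ ∈ Set.Ico (0:ℝ) 1)
    (hf : ∀ x ∈ C, ∀ y ∈ C, dist (f x) (f y) ≤ ρ * dist x y)
    (α : ℕ → ℝ)
    (x₀ : X) (hx₀ : x₀ ∈ C) (x : ℕ → X) (hx0 : x 0 = x₀)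
    (J : ℕ) (hJ : J = 2 * ⌈1 / (1 - ρ)⌉₊)
    (hα : ∀ n, α n = 1 - 2 / ((1 - ρ) * (n + J)))
    (hxrec : ∀ n, x (n + 1) = W (f (x n)) (T (x n)) (α n))
    (p : X) (hp : p ∈ C) (hfix : T p = p)
    (M : ℝ) (hM : 0 < M) (hM1 : dist x₀ p ≤ M) (hM2 : dist p (f p) / (1 - ρ) ≤ M) :
    ∀ n, dist (x (n + 1)) (x n) ≤ (2 * M * J) / ((1 - ρ) * (n + J)) :=
  stmt7_general W W1 W2 W4 C hC T f hTC hfC hT ρ hρ hf α x₀ hx₀ x hx0 J hJ hα hxrec p hp hfix M hM1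
    hM2
end

section
/- Let X be a W-hyperbolic space, C ⊆ X convex, T : C → C nonexpansive, f : C → C a ρ-contraction (ρ ∈ [0,1)), (α_n) ⊆ [0,1], and define the alternative iterative method x_0 = x, x_{n+1} = T((1-α_n)f(x_n) + α_n x_n). Then for all n: d(x_{n+2}, x_{n+1}) ≤ (1 - (1-ρ)(1-α_{n+1}))·d(x_{n+1}, x_n) + |α_n - α_{n+1}|·d(x_n, f(x_n)). -/
theorem stmt9 {X : Type*} [MetricSpace X] (W : X → X → ℝ → X)
    (W1 : ∀ (x y z : X), ∀ l ∈ Set.Icc (0:ℝ) 1,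
      dist z (W x y l) ≤ (1 - l) * dist z x + l * dist z y)
    (W2 : ∀ (x y : X), ∀ l ∈ Set.Icc (0:ℝ) 1, ∀ m ∈ Set.Icc (0:ℝ) 1,
      dist (W x y l) (W x y m) = |l - m| * dist x y)
    (W3 : ∀ (x y : X), ∀ l ∈ Set.Icc (0:ℝ) 1, W x y l = W y x (1 - l))
    (W4 : ∀ (x y z w : X), ∀ l ∈ Set.Icc (0:ℝ) 1,
      dist (W x z l) (W y w l) ≤ (1 - l) * dist x y + l * dist z w)
    (C : Set X)
    (hC : ∀ x ∈ C, ∀ y ∈ C, ∀ l ∈ Set.Icc (0:ℝ) 1, W x y l ∈ C)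
    (T f : X → X) (hTC : ∀ x ∈ C, T x ∈ C) (hfC : ∀ x ∈ C, f x ∈ C)
    (hT : ∀ x ∈ C, ∀ y ∈ C, dist (T x) (T y) ≤ dist x y)
    (ρ : ℝ) (hρ : ρ ∈ Set.Ico (0:ℝ) 1)
    (hf : ∀ x ∈ C, ∀ y ∈ C, dist (f x) (f y) ≤ ρ * dist x y)
    (α : ℕ → ℝ)
    (x₀ : X) (hx₀ : x₀ ∈ C) (x : ℕ → X) (hx0 : x 0 = x₀)
    (hα : ∀ n, α n ∈ Set.Icc (0:ℝ) 1)
    (hxrec : ∀ n, x (n + 1) = T (W (f (x n)) (x n) (α n))) :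
    ∀ n, dist (x (n + 2)) (x (n + 1)) ≤
      (1 - (1 - ρ) * (1 - α (n + 1))) * dist (x (n + 1)) (x n) +
        |α n - α (n + 1)| * dist (x n) (f (x n)) := by
  have hmem : ∀ n, x n ∈ C := by
    intro n
    induction n with
    | zero => rw [hx0]; exact hx₀
    | succ k ih =>
      rw [hxrec]
      exact hTC _ (hC _ (hfC _ ih) _ ih _ (hα k))
  intro n
  set a := α n with ha
  set b := α (n + 1) with hb
  have hxn := hmem n
  have hxn1 := hmem (n + 1)
  have hWmem : ∀ m, W (f (x m)) (x m) (α m) ∈ C := fun m =>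
    hC _ (hfC _ (hmem m)) _ (hmem m) _ (hα m)
  rw [hxrec (n+1)]
  nth_rewrite 3 [hxrec n]
  calc dist (T (W (f (x (n+1))) (x (n+1)) b)) (T (W (f (x n)) (x n) a))
      ≤ dist (W (f (x (n+1))) (x (n+1)) b) (W (f (x n)) (x n) a) :=
        hT _ (hWmem (n+1)) _ (hWmem n)
    _ ≤ dist (W (f (x (n+1))) (x (n+1)) b) (W (f (x n)) (x n) b)
        + dist (W (f (x n)) (x n) b) (W (f (x n)) (x n) a) := dist_triangle _ _ _
    _ ≤ ((1 - b) * dist (f (x (n+1))) (f (x n)) + b * dist (x (n+1)) (x n))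
        + |b - a| * dist (f (x n)) (x n) := by
        gcongr
        · exact W4 _ _ _ _ _ (hα (n+1))
        · exact le_of_eq (W2 _ _ _ (hα (n+1)) _ (hα n))
    _ ≤ ((1 - b) * (ρ * dist (x (n+1)) (x n)) + b * dist (x (n+1)) (x n))
        + |a - b| * dist (x n) (f (x n)) := by
        rw [abs_sub_comm, dist_comm (f (x n))]
        gcongr
        · have := (hα (n+1)).2; linarith
        · exact hf _ hxn1 _ hxn
    _ = (1 - (1 - ρ) * (1 - b)) * dist (x (n+1)) (x n)
        + |a - b| * dist (x n) (f (x n)) := by ring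
end

section
/- For the alternative iterative method x_0 = x, x_{n+1} = T((1-α_n)f(x_n) + α_n x_n) in a W-hyperbolic space, with p a fixed point of T and M ≥ max{d(x,p), d(p,f(p))/(1-ρ)}, it holds for all n that d(x_n, p) ≤ M and d(x_n, f(x_n)) ≤ 2M. -/
theorem stmt11 {X : Type*} [MetricSpace X] (W : X → X → ℝ → X)
    (W1 : ∀ (x y z : X), ∀ l ∈ Set.Icc (0:ℝ) 1,
      dist z (W x y l) ≤ (1 - l) * dist z x + l * dist z y)
    (W2 : ∀ (x y : X), ∀ l ∈ Set.Icc (0:ℝ) 1, ∀ m ∈ Set.Icc (0:ℝ) 1,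
      dist (W x y l) (W x y m) = |l - m| * dist x y)
    (W3 : ∀ (x y : X), ∀ l ∈ Set.Icc (0:ℝ) 1, W x y l = W y x (1 - l))
    (W4 : ∀ (x y z w : X), ∀ l ∈ Set.Icc (0:ℝ) 1,
      dist (W x z l) (W y w l) ≤ (1 - l) * dist x y + l * dist z w)
    (C : Set X)
    (hC : ∀ x ∈ C, ∀ y ∈ C, ∀ l ∈ Set.Icc (0:ℝ) 1, W x y l ∈ C)
    (T f : X → X) (hTC : ∀ x ∈ C, T x ∈ C) (hfC : ∀ x ∈ C, f x ∈ C)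
    (hT : ∀ x ∈ C, ∀ y ∈ C, dist (T x) (T y) ≤ dist x y)
    (ρ : ℝ) (hρ : ρ ∈ Set.Ico (0:ℝ) 1)
    (hf : ∀ x ∈ C, ∀ y ∈ C, dist (f x) (f y) ≤ ρ * dist x y)
    (α : ℕ → ℝ)
    (x₀ : X) (hx₀ : x₀ ∈ C) (x : ℕ → X) (hx0 : x 0 = x₀)
    (hα : ∀ n, α n ∈ Set.Icc (0:ℝ) 1)
    (hxrec : ∀ n, x (n + 1) = T (W (f (x n)) (x n) (α n)))
    (p : X) (hp : p ∈ C) (hfix : T p = p)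
    (M : ℝ) (hM : 0 < M) (hM1 : dist x₀ p ≤ M) (hM2 : dist p (f p) / (1 - ρ) ≤ M) :
    ∀ n, dist (x n) p ≤ M ∧ dist (x n) (f (x n)) ≤ 2 * M := by

  obtain ⟨hρ0, hρ1⟩ := hρ
  have hρ' : (0:ℝ) < 1 - ρ := by linarith
  have hpfp : dist p (f p) ≤ (1 - ρ) * M := by
    rw [div_le_iff₀ hρ'] at hM2; linarith [hM2]
  have key : ∀ n, x n ∈ C ∧ dist (x n) p ≤ M := by
    intro n
    induction n with
    | zero => rw [hx0]; exact ⟨hx₀, hM1⟩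
    | succ n ih =>
      obtain ⟨hmem, hd⟩ := ih
      have hfmem := hfC _ hmem
      have hWmem := hC _ hfmem _ hmem _ (hα n)
      have hpf : dist p (f (x n)) ≤ M := by
        have h1 : dist (f p) (f (x n)) ≤ ρ * dist p (x n) := hf _ hp _ hmem
        have h2 : dist p (x n) ≤ M := by rwa [dist_comm]
        calc dist p (f (x n)) ≤ dist p (f p) + dist (f p) (f (x n)) := dist_triangle _ _ _
          _ ≤ (1 - ρ) * M + ρ * M := by
              have : ρ * dist p (x n) ≤ ρ * M := by nlinarith
              linarith
          _ = M := by ring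
      constructor
      · rw [hxrec]; exact hTC _ hWmem
      · rw [hxrec]
        calc dist (T (W (f (x n)) (x n) (α n))) p
            = dist (T (W (f (x n)) (x n) (α n))) (T p) := by rw [hfix]
          _ ≤ dist (W (f (x n)) (x n) (α n)) p := hT _ hWmem _ hp
          _ = dist p (W (f (x n)) (x n) (α n)) := dist_comm _ _
          _ ≤ (1 - α n) * dist p (f (x n)) + α n * dist p (x n) := W1 _ _ _ _ (hα n)
          _ ≤ (1 - α n) * M + α n * M := by
              obtain ⟨h0, h1⟩ := hα n
              have := hpf
              have h2 : dist p (x n) ≤ M := by rwa [dist_comm]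
              nlinarith
          _ = M := by ring
  intro n
  obtain ⟨hmem, hd⟩ := key n
  refine ⟨hd, ?_⟩
  have h1 : dist (f p) (f (x n)) ≤ ρ * dist p (x n) := hf _ hp _ hmem
  have h2 : dist p (x n) ≤ M := by rw [dist_comm]; exact hd
  calc dist (x n) (f (x n)) ≤ dist (x n) p + dist p (f p) + dist (f p) (f (x n)) :=
        dist_triangle4 _ _ _ _
    _ ≤ M + (1 - ρ) * M + ρ * M := by nlinarith
    _ = 2 * M := by ring
end

section
/- Let (T_n : X → X) be nonexpansive with common fixed point p, (γ_n) positive reals satisfying d(T_n y, T_m y) ≤ (|γ_n - γ_m|/γ_n)·d(y, T_n y) for all y, n, m. Define x_0 = x, x_{n+1} = (1-α_n)u + α_n T_n(x_n) in a W-hyperbolic space, and let M ≥ max{d(x,p), d(u,p)}. Then for all n: d(x_{n+2}, x_{n+1}) ≤ α_{n+1}·d(x_{n+1}, x_n) + 2M·α_{n+1}·|γ_n - γ_{n+1}|/γ_n + 2M·|α_{n+1} - α_n|. -/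
theorem stmt13 {X : Type*} [MetricSpace X] (W : X → X → ℝ → X)
    (W1 : ∀ (x y z : X), ∀ l ∈ Set.Icc (0:ℝ) 1,
      dist z (W x y l) ≤ (1 - l) * dist z x + l * dist z y)
    (W2 : ∀ (x y : X), ∀ l ∈ Set.Icc (0:ℝ) 1, ∀ m ∈ Set.Icc (0:ℝ) 1,
      dist (W x y l) (W x y m) = |l - m| * dist x y)
    (W3 : ∀ (x y : X), ∀ l ∈ Set.Icc (0:ℝ) 1, W x y l = W y x (1 - l))
    (W4 : ∀ (x y z w : X), ∀ l ∈ Set.Icc (0:ℝ) 1,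
      dist (W x z l) (W y w l) ≤ (1 - l) * dist x y + l * dist z w)
    (T : ℕ → X → X)
    (hT : ∀ n, ∀ (x y : X), dist (T n x) (T n y) ≤ dist x y)
    (p : X) (hfix : ∀ n, T n p = p)
    (u x₀ : X) (α : ℕ → ℝ)
    (x : ℕ → X) (hx0 : x 0 = x₀)
    (hxrec : ∀ n, x (n + 1) = W u (T n (x n)) (α n))
    (hα : ∀ n, α n ∈ Set.Icc (0:ℝ) 1)
    (γ : ℕ → ℝ) (hγ : ∀ n, 0 < γ n)
    (hC1 : ∀ (y : X) (n m : ℕ), dist (T n y) (T m y) ≤ (|γ n - γ m| / γ n) * dist y (T n y))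
    (M : ℝ) (hM : 0 < M) (hM1 : dist x₀ p ≤ M) (hM2 : dist u p ≤ M) :
    ∀ n, dist (x (n + 2)) (x (n + 1)) ≤
      α (n + 1) * dist (x (n + 1)) (x n) +
        2 * M * α (n + 1) * |γ n - γ (n + 1)| / γ n + 2 * M * |α (n + 1) - α n| := by
  -- boundedness of the iterates
  have hbd : ∀ n, dist (x n) p ≤ M := by
    intro n
    induction n with
    | zero => rw [hx0]; exact hM1
    | succ n ih =>
      have hα0 := (hα n).1
      have hα1 := (hα n).2
      have h1 : dist p (x (n+1)) ≤ (1 - α n) * dist p u + α n * dist p (T n (x n)) := by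
        rw [hxrec n]; exact W1 u (T n (x n)) p (α n) (hα n)
      have h2 : dist p (T n (x n)) ≤ dist (x n) p := by
        calc dist p (T n (x n)) = dist (T n p) (T n (x n)) := by rw [hfix n]
          _ ≤ dist p (x n) := hT n p (x n)
          _ = dist (x n) p := dist_comm _ _
      rw [dist_comm]
      calc dist p (x (n+1)) ≤ (1 - α n) * dist p u + α n * dist p (T n (x n)) := h1
        _ ≤ (1 - α n) * M + α n * M := by
            apply add_le_add
            · exact mul_le_mul_of_nonneg_left (by rw [dist_comm]; exact hM2) (by linarith)
            · exact mul_le_mul_of_nonneg_left (h2.trans ih) hα0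
        _ = M := by ring
  intro n
  have hα0 := (hα (n+1)).1
  have hTbd : ∀ m k, dist (x k) p ≤ M → dist p (T m (x k)) ≤ M := by
    intro m k h
    calc dist p (T m (x k)) = dist (T m p) (T m (x k)) := by rw [hfix m]
      _ ≤ dist p (x k) := hT m p (x k)
      _ ≤ M := by rwa [dist_comm]
  -- three intermediate bounds
  have e2 : x (n+2) = W u (T (n+1) (x (n+1))) (α (n+1)) := hxrec (n+1)
  have e1 : x (n+1) = W u (T n (x n)) (α n) := hxrec n
  have A : dist (W u (T (n+1) (x (n+1))) (α (n+1))) (W u (T (n+1) (x n)) (α (n+1)))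
      ≤ α (n+1) * dist (x (n+1)) (x n) := by
    calc dist (W u (T (n+1) (x (n+1))) (α (n+1))) (W u (T (n+1) (x n)) (α (n+1)))
        ≤ (1 - α (n+1)) * dist u u + α (n+1) * dist (T (n+1) (x (n+1))) (T (n+1) (x n)) :=
          W4 u u (T (n+1) (x (n+1))) (T (n+1) (x n)) (α (n+1)) (hα (n+1))
      _ = α (n+1) * dist (T (n+1) (x (n+1))) (T (n+1) (x n)) := by
          rw [dist_self]; ring
      _ ≤ α (n+1) * dist (x (n+1)) (x n) :=
          mul_le_mul_of_nonneg_left (hT (n+1) _ _) hα0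
  have B : dist (W u (T (n+1) (x n)) (α (n+1))) (W u (T n (x n)) (α (n+1)))
      ≤ 2 * M * α (n+1) * |γ n - γ (n+1)| / γ n := by
    have hdd : dist (T (n+1) (x n)) (T n (x n)) ≤ |γ n - γ (n+1)| / γ n * (2 * M) := by
      have := hC1 (x n) n (n+1)
      have hbnd : dist (x n) (T n (x n)) ≤ 2 * M := by
        calc dist (x n) (T n (x n)) ≤ dist (x n) p + dist p (T n (x n)) := dist_triangle _ _ _
          _ ≤ M + M := add_le_add (hbd n) (hTbd n n (hbd n))
          _ = 2 * M := by ring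
      calc dist (T (n+1) (x n)) (T n (x n)) = dist (T n (x n)) (T (n+1) (x n)) := dist_comm _ _
        _ ≤ |γ n - γ (n+1)| / γ n * dist (x n) (T n (x n)) := this
        _ ≤ |γ n - γ (n+1)| / γ n * (2 * M) := by
            apply mul_le_mul_of_nonneg_left hbnd
            have := (hγ n).le; positivity
    calc dist (W u (T (n+1) (x n)) (α (n+1))) (W u (T n (x n)) (α (n+1)))
        ≤ (1 - α (n+1)) * dist u u + α (n+1) * dist (T (n+1) (x n)) (T n (x n)) :=
          W4 u u (T (n+1) (x n)) (T n (x n)) (α (n+1)) (hα (n+1))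
      _ = α (n+1) * dist (T (n+1) (x n)) (T n (x n)) := by rw [dist_self]; ring
      _ ≤ α (n+1) * (|γ n - γ (n+1)| / γ n * (2 * M)) :=
          mul_le_mul_of_nonneg_left hdd hα0
      _ = 2 * M * α (n+1) * |γ n - γ (n+1)| / γ n := by ring
  have C : dist (W u (T n (x n)) (α (n+1))) (W u (T n (x n)) (α n))
      ≤ 2 * M * |α (n+1) - α n| := by
    have huT : dist u (T n (x n)) ≤ 2 * M := by
      calc dist u (T n (x n)) ≤ dist u p + dist p (T n (x n)) := dist_triangle _ _ _
        _ ≤ M + M := add_le_add hM2 (hTbd n n (hbd n))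
        _ = 2 * M := by ring
    calc dist (W u (T n (x n)) (α (n+1))) (W u (T n (x n)) (α n))
        = |α (n+1) - α n| * dist u (T n (x n)) := W2 u (T n (x n)) (α (n+1)) (hα (n+1)) (α n) (hα n)
      _ ≤ |α (n+1) - α n| * (2 * M) := mul_le_mul_of_nonneg_left huT (abs_nonneg _)
      _ = 2 * M * |α (n+1) - α n| := by ring
  calc dist (x (n+2)) (x (n+1))
      ≤ dist (x (n+2)) (W u (T (n+1) (x n)) (α (n+1)))
        + dist (W u (T (n+1) (x n)) (α (n+1))) (W u (T n (x n)) (α (n+1)))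
        + dist (W u (T n (x n)) (α (n+1))) (x (n+1)) := by
          exact dist_triangle4 _ _ _ _
    _ ≤ α (n+1) * dist (x (n+1)) (x n) + 2 * M * α (n+1) * |γ n - γ (n+1)| / γ n
        + 2 * M * |α (n+1) - α n| := by
        apply add_le_add (add_le_add _ B)
        · rw [e1]; exact C
        · rw [e2]; exact A
end

section
/- Let X be a Hilbert space, A : X → 2^X maximally monotone with zer(A) ≠ ∅, γ_n = (n+2)/(n+1), α_n = 1 - 2/(n+2), u, x ∈ X, and define x_0 = x, x_{n+1} = (1-α_n)u + α_n J_{γ_n A}(x_n), where J_{γA} = (Id + γA)^{-1} is the resolvent. If p ∈ zer(A) and M ≥ max{‖x - p‖, ‖u - p‖}, then for all n: ‖x_{n+1} - x_n‖ ≤ 6M/(n+2) and ‖x_n - J_{γ_n A}(x_n)‖ ≤ 10M/(n+2). -/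
/-!
Monotonicity of `A` makes every resolvent nonexpansive, fixes the zeros of `A`, and gives
`‖J_γ y - J_γ' y‖ ≤ |γ - γ'| / γ * ‖y - J_γ y‖`. Hence the Halpern iterates stay in the ball
`closedBall p M`, and the increments `aₙ = ‖x (n+1) - x n‖` obey
`aₙ₊₁ ≤ αₙ₊₁ (aₙ + 2M / ((n+1)(n+3))) + (αₙ₊₁ - αₙ) 2M`, which propagates `aₙ ≤ 6M / (n+2)`.
Finally `‖xₙ - Jₙ xₙ‖ ≤ aₙ + (1 - αₙ) ‖u - Jₙ xₙ‖ ≤ aₙ + 4M / (n+2)`.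
-/

open scoped InnerProductSpace

section

variable {X : Type*} [NormedAddCommGroup X] [InnerProductSpace ℝ X]

def IsMonotoneOperator (A : X → Set X) : Prop :=
  ∀ x y u v, u ∈ A x → v ∈ A y → 0 ≤ ⟪u - v, x - y⟫_ℝ

theorem norm_le_of_sq_norm_le_inner {a b : X} (h : ‖a‖ ^ 2 ≤ ⟪b, a⟫_ℝ) : ‖a‖ ≤ ‖b‖ := by
  nlinarith [real_inner_le_norm b a, norm_nonneg a, norm_nonneg b]

namespace IsMonotoneOperator

-- `γ⁻¹ • (y - a) ∈ A a` says that `a` is the resolvent `J_{γA} y = (Id + γA)⁻¹ y`.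

variable {A : X → Set X} {γ γ' : ℝ} {a b y z : X}

theorem inner_resolvent_nonneg (hA : IsMonotoneOperator A) (hγ' : 0 < γ')
    (ha : γ⁻¹ • (y - a) ∈ A a) (hb : γ'⁻¹ • (z - b) ∈ A b) :
    0 ≤ ⟪(γ' / γ) • (y - a) - (z - b), a - b⟫_ℝ := by
  have e : (γ' / γ) • (y - a) - (z - b) = γ' • (γ⁻¹ • (y - a) - γ'⁻¹ • (z - b)) := by
    rw [smul_sub γ', smul_smul, smul_smul, mul_inv_cancel₀ hγ'.ne', one_smul, div_eq_mul_inv]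
  rw [e, real_inner_smul_left]
  exact mul_nonneg hγ'.le (hA _ _ _ _ ha hb)

theorem norm_sub_le_of_resolvent (hA : IsMonotoneOperator A) (hγ : 0 < γ)
    (ha : γ⁻¹ • (y - a) ∈ A a) (hb : γ⁻¹ • (z - b) ∈ A b) : ‖a - b‖ ≤ ‖y - z‖ := by
  have h := hA.inner_resolvent_nonneg hγ ha hb
  rw [div_self hγ.ne', one_smul, show y - a - (z - b) = y - z - (a - b) by abel, inner_sub_left,
    real_inner_self_eq_norm_sq] at h
  exact norm_le_of_sq_norm_le_inner (by linarith)

theorem eq_of_resolvent_of_zero_mem (hA : IsMonotoneOperator A) (hγ : 0 < γ) {p : X}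
    (ha : γ⁻¹ • (p - a) ∈ A a) (hp : 0 ∈ A p) : a = p := by
  have hp' : γ⁻¹ • (p - p) ∈ A p := by rwa [sub_self, smul_zero]
  simpa [sub_eq_zero] using hA.norm_sub_le_of_resolvent hγ ha hp'

theorem norm_sub_le_of_resolvent_of_resolvent (hA : IsMonotoneOperator A) (hγ : 0 < γ)
    (hγ' : 0 < γ') (ha : γ⁻¹ • (y - a) ∈ A a) (hb : γ'⁻¹ • (y - b) ∈ A b) :
    ‖a - b‖ ≤ |γ - γ'| / γ * ‖y - a‖ := by
  have h := hA.inner_resolvent_nonneg hγ' ha hb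
  rw [show (γ' / γ) • (y - a) - (y - b) = ((γ' - γ) / γ) • (y - a) - (a - b) by
      rw [sub_div, div_self hγ.ne', sub_smul, one_smul]; abel,
    inner_sub_left, real_inner_self_eq_norm_sq] at h
  calc ‖a - b‖ ≤ ‖((γ' - γ) / γ) • (y - a)‖ := norm_le_of_sq_norm_le_inner (by linarith)
    _ = |γ - γ'| / γ * ‖y - a‖ := by
      rw [norm_smul, Real.norm_eq_abs, abs_div, abs_of_pos hγ, abs_sub_comm]

end IsMonotoneOperator

theorem halpern_rate_step {t M a d e : ℝ} (ht : 0 ≤ t) (hM : 0 ≤ M) (ha : a ≤ 6 * M / (t + 2))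
    (hd : d ≤ 2 * M / ((t + 1) * (t + 3))) (he : e ≤ 2 * M) :
    (1 - 2 / (t + 3)) * (a + d) + |1 - 2 / (t + 3) - (1 - 2 / (t + 2))| * e ≤ 6 * M / (t + 3) := by
  have hα : 0 ≤ 1 - 2 / (t + 3) := by rw [sub_nonneg, div_le_one (by positivity)]; linarith
  have hδ : 1 - 2 / (t + 3) - (1 - 2 / (t + 2)) = 2 / ((t + 2) * (t + 3)) := by
    field_simp; ring
  calc (1 - 2 / (t + 3)) * (a + d) + |1 - 2 / (t + 3) - (1 - 2 / (t + 2))| * e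
      ≤ (1 - 2 / (t + 3)) * (6 * M / (t + 2) + 2 * M / ((t + 1) * (t + 3)))
        + 2 / ((t + 2) * (t + 3)) * (2 * M) := by
        rw [hδ, abs_of_nonneg (by positivity)]; gcongr
    _ = 6 * M / (t + 3) - 2 * M / ((t + 2) * (t + 3) ^ 2) := by field_simp; ring
    _ ≤ 6 * M / (t + 3) := sub_le_self _ (by positivity)

section Halpern

variable {T : ℕ → X → X} {α : ℕ → ℝ} {u p : X} {x : ℕ → X} {M : ℝ}

theorem halpern_norm_sub_le (hα : ∀ n, α n ∈ Set.Icc (0 : ℝ) 1)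
    (hT : ∀ n y, ‖T n y - p‖ ≤ ‖y - p‖)
    (hx : ∀ n, x (n + 1) = (1 - α n) • u + α n • T n (x n))
    (hx0 : ‖x 0 - p‖ ≤ M) (hu : ‖u - p‖ ≤ M) (n : ℕ) : ‖x n - p‖ ≤ M := by
  induction n with
  | zero => exact hx0
  | succ n ih =>
    rw [hx, ← mem_closedBall_iff_norm]
    exact convex_closedBall p M (mem_closedBall_iff_norm.2 hu)
      (mem_closedBall_iff_norm.2 ((hT n _).trans ih)) (sub_nonneg.2 (hα n).2) (hα n).1 (by ring)

theorem halpern_norm_sub_succ_le (hT : ∀ n y z, ‖T n y - T n z‖ ≤ ‖y - z‖)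
    (hx : ∀ n, x (n + 1) = (1 - α n) • u + α n • T n (x n)) {n : ℕ} (hα : 0 ≤ α (n + 1)) :
    ‖x (n + 2) - x (n + 1)‖ ≤ α (n + 1) * (‖x (n + 1) - x n‖ + ‖T (n + 1) (x n) - T n (x n)‖)
      + |α (n + 1) - α n| * ‖u - T n (x n)‖ := by
  have e : x (n + 2) - x (n + 1) = α (n + 1) • ((T (n + 1) (x (n + 1)) - T (n + 1) (x n))
      + (T (n + 1) (x n) - T n (x n))) + (α n - α (n + 1)) • (u - T n (x n)) := by
    rw [hx, hx]; module
  rw [e]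
  refine (norm_add_le _ _).trans ?_
  rw [norm_smul, norm_smul, Real.norm_of_nonneg hα, Real.norm_eq_abs, abs_sub_comm]
  gcongr
  exact (norm_add_le _ _).trans (by gcongr; exact hT _ _ _)

theorem halpern_norm_sub_apply_le (hx : ∀ n, x (n + 1) = (1 - α n) • u + α n • T n (x n))
    {n : ℕ} (hα : α n ≤ 1) :
    ‖x n - T n (x n)‖ ≤ ‖x (n + 1) - x n‖ + (1 - α n) * ‖u - T n (x n)‖ := by
  have e : x (n + 1) - T n (x n) = (1 - α n) • (u - T n (x n)) := by rw [hx]; module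
  calc ‖x n - T n (x n)‖ ≤ ‖x n - x (n + 1)‖ + ‖x (n + 1) - T n (x n)‖ :=
        norm_sub_le_norm_sub_add_norm_sub _ _ _
    _ = _ := by rw [norm_sub_rev, e, norm_smul, Real.norm_of_nonneg (sub_nonneg.2 hα)]

theorem halpern_rate (hT : ∀ n y z, ‖T n y - T n z‖ ≤ ‖y - z‖) (hTp : ∀ n, T n p = p)
    (hTsucc : ∀ (n : ℕ) y, ‖T (n + 1) y - T n y‖ ≤ ‖y - T (n + 1) y‖ / ((n + 1) * (n + 3)))
    (hα : ∀ n : ℕ, α n = 1 - 2 / (n + 2))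
    (hx : ∀ n, x (n + 1) = (1 - α n) • u + α n • T n (x n))
    (hx0 : ‖x 0 - p‖ ≤ M) (hu : ‖u - p‖ ≤ M) (n : ℕ) :
    ‖x (n + 1) - x n‖ ≤ 6 * M / (n + 2) ∧ ‖x n - T n (x n)‖ ≤ 10 * M / (n + 2) := by
  have hM : 0 ≤ M := (norm_nonneg _).trans hu
  have hαI : ∀ n, α n ∈ Set.Icc (0 : ℝ) 1 := fun n => by
    rw [hα, Set.mem_Icc, sub_nonneg, div_le_one (by positivity)]
    exact ⟨by linarith [n.cast_nonneg (α := ℝ)], sub_le_self _ (by positivity)⟩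
  have hTquasi : ∀ n y, ‖T n y - p‖ ≤ ‖y - p‖ := fun n y => by
    simpa only [hTp n] using hT n y p
  have hxp := halpern_norm_sub_le hαI hTquasi hx hx0 hu
  have h2M : ∀ a b, ‖a - p‖ ≤ M → ‖b - p‖ ≤ M → ‖a - b‖ ≤ 2 * M := fun a b ha hb =>
    (norm_sub_le_norm_sub_add_norm_sub a p b).trans (by rw [norm_sub_rev p]; linarith)
  have huT : ∀ k m, ‖u - T k (x m)‖ ≤ 2 * M := fun k m => h2M _ _ hu ((hTquasi k _).trans (hxp m))
  have hinc : ∀ n : ℕ, ‖x (n + 1) - x n‖ ≤ 6 * M / (n + 2) := by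
    intro n
    induction n with
    | zero =>
      have hx1 : x 1 = u := by simp [hx, hα]
      rw [hx1, Nat.cast_zero, zero_add]; linarith [h2M u (x 0) hu hx0]
    | succ n ih =>
      have hD : ‖T (n + 1) (x n) - T n (x n)‖ ≤ 2 * M / ((n + 1) * (n + 3)) :=
        (hTsucc n _).trans (by gcongr; exact h2M _ _ (hxp n) ((hTquasi _ _).trans (hxp n)))
      have hstep := halpern_norm_sub_succ_le hT hx (hαI (n + 1)).1 (n := n)
      have hn : ((n + 1 : ℕ) : ℝ) + 2 = n + 3 := by push_cast; ring
      rw [hα, hα, hn] at hstep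
      rw [hn]
      exact hstep.trans (halpern_rate_step n.cast_nonneg hM ih hD (huT n n))
  refine ⟨hinc n, ?_⟩
  calc ‖x n - T n (x n)‖ ≤ ‖x (n + 1) - x n‖ + (1 - α n) * ‖u - T n (x n)‖ :=
        halpern_norm_sub_apply_le hx (hαI n).2
    _ ≤ 6 * M / (n + 2) + 2 / (n + 2) * (2 * M) := by
        rw [hα, sub_sub_cancel]; gcongr; exacts [hinc n, huT n n]
    _ = 10 * M / (n + 2) := by ring

end Halpern

end

theorem stmt19_general {X : Type*} [NormedAddCommGroup X] [InnerProductSpace ℝ X]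
    (A : X → Set X)
    (hmono : ∀ (x y u v : X), u ∈ A x → v ∈ A y → 0 ≤ (inner ℝ (u - v) (x - y) : ℝ))
    (γ : ℕ → ℝ) (hγ : ∀ n, γ n = (n + 2) / (n + 1))
    (α : ℕ → ℝ) (hα : ∀ n, α n = 1 - 2 / (n + 2))
    (J : ℕ → X → X)
    (hres : ∀ (n : ℕ) (y : X), (γ n)⁻¹ • (y - J n y) ∈ A (J n y))
    (u x₀ : X) (x : ℕ → X) (hx0 : x 0 = x₀)
    (hxrec : ∀ n, x (n + 1) = (1 - α n) • u + α n • J n (x n))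
    (p : X) (hp : (0 : X) ∈ A p)
    (M : ℝ) (hM1 : ‖x₀ - p‖ ≤ M) (hM2 : ‖u - p‖ ≤ M) :
    ∀ n, ‖x (n + 1) - x n‖ ≤ 6 * M / (n + 2) ∧
      ‖x n - J n (x n)‖ ≤ 10 * M / (n + 2) := by
  have hA : IsMonotoneOperator A := hmono
  have hγpos : ∀ n, 0 < γ n := fun n => by rw [hγ]; positivity
  have hγstep : ∀ n : ℕ, |γ (n + 1) - γ n| / γ (n + 1) = 1 / ((n + 1) * (n + 3)) := fun n => by
    have hdiff : γ n - γ (n + 1) = 1 / ((n + 1) * (n + 2)) := by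
      rw [hγ, hγ]; push_cast; field_simp; ring
    rw [abs_sub_comm, hdiff, abs_of_pos (by positivity), hγ]
    push_cast; field_simp; ring
  refine halpern_rate (fun n y z => hA.norm_sub_le_of_resolvent (hγpos n) (hres n y) (hres n z))
    (fun n => hA.eq_of_resolvent_of_zero_mem (hγpos n) (hres n p) hp) (fun n y => ?_) hα hxrec
    (hx0 ▸ hM1) hM2
  have h := hA.norm_sub_le_of_resolvent_of_resolvent (hγpos (n + 1)) (hγpos n)
    (hres (n + 1) y) (hres n y)
  rwa [hγstep, one_div_mul_eq_div] at h

theorem stmt19 {X : Type*} [NormedAddCommGroup X] [InnerProductSpace ℝ X] [CompleteSpace X]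
    (A : X → Set X)
    (hmono : ∀ (x y u v : X), u ∈ A x → v ∈ A y → 0 ≤ (inner ℝ (u - v) (x - y) : ℝ))
    (hmax : ∀ (x u : X), (∀ (y v : X), v ∈ A y → 0 ≤ (inner ℝ (u - v) (x - y) : ℝ)) → u ∈ A x)
    (γ : ℕ → ℝ) (hγ : ∀ n, γ n = (n + 2) / (n + 1))
    (α : ℕ → ℝ) (hα : ∀ n, α n = 1 - 2 / (n + 2))
    (J : ℕ → X → X)
    (hres : ∀ (n : ℕ) (y : X), (γ n)⁻¹ • (y - J n y) ∈ A (J n y))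
    (u x₀ : X) (x : ℕ → X) (hx0 : x 0 = x₀)
    (hxrec : ∀ n, x (n + 1) = (1 - α n) • u + α n • J n (x n))
    (p : X) (hp : (0 : X) ∈ A p)
    (M : ℝ) (hM : 0 < M) (hM1 : ‖x₀ - p‖ ≤ M) (hM2 : ‖u - p‖ ≤ M) :
    ∀ n, ‖x (n + 1) - x n‖ ≤ 6 * M / (n + 2) ∧
      ‖x n - J n (x n)‖ ≤ 10 * M / (n + 2) :=
  stmt19_general A hmono γ hγ α hα J hres u x₀ x hx0 hxrec p hp M hM1 hM2
end
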